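/- arXiv:1907.12589 — 2 statements merged into one kernel-verified Lean document; each statement's English description precedes it below -/
import Mathlib

section
/- Fix b > 0. Then the ratio of the FAB p-value to the UMPU p-value converges to one half as z tends to infinity: lim_{z→∞} p(z,b)/p(z,0) = 1/2. -/
open MeasureTheory ProbabilityTheory Filter

/-- Φ, the standard normal cumulative distribution function. -/
noncomputable def Phi : ℝ → ℝ := fun x => ProbabilityTheory.cdf (gaussianReal 0 1) x

/-- The FAB p-value function. -/
noncomputable def fabP (z b : ℝ) : ℝ := 1 - |Phi (z + b) - Phi (-z)|

open Set Real Topology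
open scoped NNReal

/-! For `z ≥ 0` both p-values are Gaussian tails, `p(z,b) = Φ(-z) + Φ(-z-b)` and
`p(z,0) = 2Φ(-z)`, so the ratio is `1/2 + Φ(-z-b) / (2Φ(-z))`. Moving the mean of a Gaussian
from `0` to `b` multiplies its density by `exp(bt - b²/2)`, which is at most `exp(bx)` on
`(-∞, x]`; hence `Φ(x-b) ≤ exp(bx) Φ(x)` and `Φ(-z-b) / Φ(-z) ≤ exp(-bz) → 0`. -/

namespace ProbabilityTheory

lemma gaussianPDFReal_eq_exp_mul_gaussianPDFReal_zero (μ : ℝ) (v : ℝ≥0) (x : ℝ) :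
    gaussianPDFReal μ v x = exp ((μ * x - μ ^ 2 / 2) / v) * gaussianPDFReal 0 v x := by
  simp only [gaussianPDFReal, sub_zero]
  rw [mul_left_comm, ← exp_add]
  congr 3
  by_cases hv : (v : ℝ) = 0
  · simp [hv]
  · field_simp
    ring

lemma cdf_gaussianReal_pos (μ : ℝ) {v : ℝ≥0} (hv : v ≠ 0) (x : ℝ) :
    0 < cdf (gaussianReal μ v) x := by
  rw [cdf_eq_real]
  refine ENNReal.toReal_pos ?_ (measure_ne_top _ _)
  rw [gaussianReal_of_var_ne_zero _ hv, Ne, withDensity_apply_eq_zero' (by fun_prop),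
    ← Function.support, support_gaussianPDF hv, univ_inter, Real.volume_Iic]
  exact ENNReal.top_ne_zero

lemma cdf_gaussianReal_zero_neg {v : ℝ≥0} (hv : v ≠ 0) (x : ℝ) :
    cdf (gaussianReal 0 v) (-x) = 1 - cdf (gaussianReal 0 v) x := by
  have := nullSingletonClass_gaussianReal (μ := 0) hv
  have hneg := gaussianReal_map_neg (μ := 0) (v := v)
  rw [neg_zero] at hneg
  rw [cdf_eq_real, cdf_eq_real, ← hneg, map_measureReal_apply measurable_neg measurableSet_Iic,
    hneg, neg_preimage, neg_Iic, neg_neg, measureReal_congr Ioi_ae_eq_Ici.symm, ← compl_Iic,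
    probReal_compl_eq_one_sub measurableSet_Iic]

lemma cdf_gaussianReal_zero_sub (μ : ℝ) (v : ℝ≥0) (x : ℝ) :
    cdf (gaussianReal 0 v) (x - μ) = cdf (gaussianReal μ v) x := by
  rw [cdf_eq_real, cdf_eq_real, ← zero_add μ, ← gaussianReal_map_add_const,
    map_measureReal_apply (measurable_add_const μ) measurableSet_Iic, preimage_add_const_Iic,
    zero_add]

lemma cdf_gaussianReal_le_exp_mul {μ : ℝ} (hμ : 0 ≤ μ) {v : ℝ≥0} (hv : v ≠ 0) (x : ℝ) :
    cdf (gaussianReal μ v) x ≤ exp (μ * x / v) * cdf (gaussianReal 0 v) x := by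
  simp only [cdf_eq_real, measureReal_def, gaussianReal_apply_eq_integral _ hv,
    ENNReal.toReal_ofReal (setIntegral_nonneg measurableSet_Iic
      fun _ _ ↦ gaussianPDFReal_nonneg _ _ _)]
  rw [← integral_const_mul]
  refine setIntegral_mono_on (integrable_gaussianPDFReal _ _).integrableOn
    ((integrable_gaussianPDFReal _ _).const_mul _).integrableOn measurableSet_Iic fun t ht ↦ ?_
  rw [gaussianPDFReal_eq_exp_mul_gaussianPDFReal_zero]
  gcongr
  · exact gaussianPDFReal_nonneg _ _ _
  · nlinarith [mem_Iic.1 ht, sq_nonneg μ]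

end ProbabilityTheory

lemma Phi_pos (x : ℝ) : 0 < Phi x := cdf_gaussianReal_pos 0 one_ne_zero x

lemma Phi_neg (x : ℝ) : Phi (-x) = 1 - Phi x :=
  cdf_gaussianReal_zero_neg one_ne_zero x

lemma monotone_Phi : Monotone Phi := monotone_cdf _

lemma Phi_sub_le_exp_mul_Phi {b : ℝ} (hb : 0 ≤ b) (x : ℝ) :
    Phi (x - b) ≤ exp (b * x) * Phi x := by
  simpa [Phi, cdf_gaussianReal_zero_sub] using cdf_gaussianReal_le_exp_mul hb one_ne_zero x

lemma tendsto_Phi_neg_add_div_Phi_neg {b : ℝ} (hb : 0 < b) :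
    Tendsto (fun z ↦ Phi (-(z + b)) / Phi (-z)) atTop (𝓝 0) := by
  refine squeeze_zero (fun z ↦ (div_pos (Phi_pos _) (Phi_pos _)).le) (fun z ↦ ?_)
    (tendsto_exp_neg_atTop_nhds_zero.comp (tendsto_id.const_mul_atTop hb))
  rw [div_le_iff₀ (Phi_pos _), neg_add', Function.comp_apply, id, ← mul_neg]
  exact Phi_sub_le_exp_mul_Phi hb.le (-z)

lemma fabP_eq (z : ℝ) {b : ℝ} (hzb : -z ≤ z + b) : fabP z b = Phi (-z) + Phi (-(z + b)) := by
  rw [fabP, abs_of_nonneg (sub_nonneg.2 (monotone_Phi hzb)), Phi_neg (z + b)]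
  ring

lemma fabP_div_fabP_zero {z b : ℝ} (hz : 0 ≤ z) (hb : 0 ≤ b) :
    fabP z b / fabP z 0 = 1 / 2 + Phi (-(z + b)) / Phi (-z) / 2 := by
  have hPhi : Phi (-z) ≠ 0 := (Phi_pos _).ne'
  rw [fabP_eq z (by linarith), fabP_eq z (by linarith), add_zero]
  field_simp
  ring

theorem stmt_8 (b : ℝ) (hb : 0 < b) :
    Tendsto (fun z : ℝ => fabP z b / fabP z 0) atTop (nhds (1 / 2)) := by
  have h := ((tendsto_Phi_neg_add_div_Phi_neg hb).div_const 2).const_add (1 / 2)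
  rw [zero_div, add_zero] at h
  refine h.congr' ?_
  filter_upwards [eventually_ge_atTop 0] with z hz
  exact (fabP_div_fabP_zero hz hb.le).symm
end

section
/- Let θ ∈ ℝ, b ∈ ℝ and u ∈ (0,1). Suppose z_l, z_h ∈ ℝ satisfy z_l < −b/2 < z_h, Φ(z_h + b) − Φ(−z_h) = 1 − u, and Φ(−z_l) − Φ(z_l + b) = 1 − u. If Z is a real random variable with the normal distribution N(θ, 1), then the cumulative distribution function of the FAB p-value U = p(Z,b) at u is given by P( p(Z,b) ≤ u ) = Φ(z_l − θ) + 1 − Φ(z_h − θ). -/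
open MeasureTheory ProbabilityTheory

/-!
The function `g z = Φ(z + b) - Φ(-z)` is strictly increasing, and `p(z, b) = 1 - |g z|`.
The two boundary equations say `g z_h = 1 - u` and `g z_l = -(1 - u)`, so
`p(z, b) ≤ u ↔ |g z| ≥ 1 - u ↔ z ≤ z_l ∨ z_h ≤ z`: the event is the union of two disjoint
half-lines, whose `N(θ, 1)`-probabilities are read off the shifted cdf.
-/

open Set

namespace ProbabilityTheory

variable {μ : Measure ℝ} [IsProbabilityMeasure μ]

lemma strictMono_cdf [μ.IsOpenPosMeasure] : StrictMono (cdf μ) := by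
  intro x y hxy
  have hpos : 0 < μ (Ioc x y) :=
    (isOpen_Ioo.measure_pos μ (nonempty_Ioo.2 hxy)).trans_le (measure_mono Ioo_subset_Ioc_self)
  rw [← measure_cdf μ, StieltjesFunction.measure_Ioc, ENNReal.ofReal_pos, sub_pos] at hpos
  exact hpos

lemma measure_Ici_eq_ofReal_one_sub_cdf [NullSingletonClass μ] (x : ℝ) :
    μ (Ici x) = ENNReal.ofReal (1 - cdf μ x) := by
  rw [← measure_congr Ioi_ae_eq_Ici, ← compl_Iic, prob_compl_eq_one_sub measurableSet_Iic,
    ← ofReal_cdf, ← ENNReal.ofReal_one, ENNReal.ofReal_sub _ (cdf_nonneg μ x)]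

lemma measure_Iic_union_Ici [NullSingletonClass μ] {a b : ℝ} (hab : a < b) :
    μ (Iic a ∪ Ici b) = ENNReal.ofReal (cdf μ a + 1 - cdf μ b) := by
  rw [measure_union (Iic_disjoint_Ici.2 hab.not_ge) measurableSet_Ici, ← ofReal_cdf,
    measure_Ici_eq_ofReal_one_sub_cdf, add_sub_assoc,
    ENNReal.ofReal_add (cdf_nonneg μ a) (sub_nonneg.2 (cdf_le_one μ b))]

lemma cdf_map_add_const (c x : ℝ) :
    cdf (μ.map (· + c)) x = cdf μ (x - c) := by
  have := Measure.isProbabilityMeasure_map (μ := μ) (measurable_add_const c).aemeasurable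
  rw [cdf_eq_real, cdf_eq_real, map_measureReal_apply (measurable_add_const c) measurableSet_Iic,
    preimage_add_const_Iic]

lemma cdf_gaussianReal (θ : ℝ) (v : NNReal) (x : ℝ) :
    cdf (gaussianReal θ v) x = cdf (gaussianReal 0 v) (x - θ) := by
  rw [← cdf_map_add_const, gaussianReal_map_add_const, zero_add]

end ProbabilityTheory

lemma cdf_gaussianReal_eq_Phi (θ x : ℝ) : cdf (gaussianReal θ 1) x = Phi (x - θ) :=
  cdf_gaussianReal θ 1 x

lemma strictMono_Phi : StrictMono Phi :=
  have := (gaussianReal_absolutelyContinuous' 0 one_ne_zero).isOpenPosMeasure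
  strictMono_cdf

lemma strictMono_Phi_add_sub_Phi_neg (b : ℝ) : StrictMono fun z => Phi (z + b) - Phi (-z) :=
  fun _ _ hxy =>
    sub_lt_sub (strictMono_Phi (add_lt_add_left hxy b)) (strictMono_Phi (neg_lt_neg hxy))

lemma fabP_le_iff {b u zl zh : ℝ} (hh : Phi (zh + b) - Phi (-zh) = 1 - u)
    (hl : Phi (-zl) - Phi (zl + b) = 1 - u) (z : ℝ) :
    fabP z b ≤ u ↔ z ≤ zl ∨ zh ≤ z := by
  have hg := strictMono_Phi_add_sub_Phi_neg b
  have hgl : Phi (zl + b) - Phi (-zl) = -(1 - u) := by rw [← hl, neg_sub]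
  rw [fabP, sub_le_comm, le_abs, le_neg, or_comm, ← hgl, ← hh]
  exact or_congr hg.le_iff_le hg.le_iff_le

theorem stmt_18_general {Ω : Type*} [MeasurableSpace Ω] (P : Measure Ω) [IsProbabilityMeasure P]
    (θ b u zl zh : ℝ)
    (hzl : zl < -b / 2) (hzh : -b / 2 < zh)
    (hh : Phi (zh + b) - Phi (-zh) = 1 - u)
    (hl : Phi (-zl) - Phi (zl + b) = 1 - u)
    (Z : Ω → ℝ) (hZ : P.map Z = gaussianReal θ 1) :
    P {ω | fabP (Z ω) b ≤ u} = ENNReal.ofReal (Phi (zl - θ) + 1 - Phi (zh - θ)) := by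
  have hZm : AEMeasurable Z P := aemeasurable_of_map_neZero (by rw [hZ]; infer_instance)
  have hevent : {ω | fabP (Z ω) b ≤ u} = Z ⁻¹' (Iic zl ∪ Ici zh) := by
    ext ω
    simp only [mem_ofPred_eq, fabP_le_iff hh hl, mem_preimage, mem_union, mem_Iic, mem_Ici]
  have := nullSingletonClass_gaussianReal (μ := θ) one_ne_zero
  rw [hevent, ← Measure.map_apply_of_aemeasurable hZm (measurableSet_Iic.union measurableSet_Ici),
    hZ, measure_Iic_union_Ici (hzl.trans hzh), cdf_gaussianReal_eq_Phi, cdf_gaussianReal_eq_Phi]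

theorem stmt_18 {Ω : Type*} [MeasurableSpace Ω] (P : Measure Ω) [IsProbabilityMeasure P]
    (θ b u zl zh : ℝ) (hu : u ∈ Set.Ioo (0 : ℝ) 1)
    (hzl : zl < -b / 2) (hzh : -b / 2 < zh)
    (hh : Phi (zh + b) - Phi (-zh) = 1 - u)
    (hl : Phi (-zl) - Phi (zl + b) = 1 - u)
    (Z : Ω → ℝ) (hZ : P.map Z = gaussianReal θ 1) :
    P {ω | fabP (Z ω) b ≤ u} = ENNReal.ofReal (Phi (zl - θ) + 1 - Phi (zh - θ)) :=
  stmt_18_general P θ b u zl zh hzl hzh hh hl Z hZ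
end
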